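/- Let μ be the bracket on ℝ⁵ given by μ(e₁,e₂) = e₅. Then: (i) a symmetric 5×5 real matrix D is a derivation of μ if and only if D = diag(A, B, a+b) in block form, where A = [[a,α],[α,b]] and B are arbitrary symmetric 2×2 real matrices acting on span(e₁,e₂) and span(e₃,e₄) respectively, and the (5,5) entry equals a+b = tr A; (ii) an orthogonal 5×5 real matrix g is an automorphism of μ if and only if g = diag(H₁, H₂, det H₁) in block form with H₁, H₂ orthogonal 2×2 matrices. -/
import Mathlib


open Matrix

/-- The bracket on ℝ⁵ given by μ(e₁,e₂) = e₅ (bilinear extension);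
this is λ₇ = (0,0,0,0,12), the direct sum of the Heisenberg algebra and ℝ². -/
def lam7 (x y : Fin 5 → ℝ) : Fin 5 → ℝ := ![0, 0, 0, 0, x 0 * y 1 - x 1 * y 0]

/-- `D` is a derivation of the bracket `lam7`. -/
def IsDerivLam7 (D : Matrix (Fin 5) (Fin 5) ℝ) : Prop :=
  ∀ x y : Fin 5 → ℝ, D.mulVec (lam7 x y) = lam7 (D.mulVec x) y + lam7 x (D.mulVec y)

/-- `g` is an automorphism of the bracket `lam7`. -/
def IsAutoLam7 (g : Matrix (Fin 5) (Fin 5) ℝ) : Prop :=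
  IsUnit g ∧ ∀ x y : Fin 5 → ℝ, g.mulVec (lam7 x y) = lam7 (g.mulVec x) (g.mulVec y)

set_option maxHeartbeats 2000000 in
theorem stmt10 :
    (∀ D : Matrix (Fin 5) (Fin 5) ℝ, D.IsSymm →
      (IsDerivLam7 D ↔ ∃ a b α c d e : ℝ,
        D = !![a, α, 0, 0, 0;
               α, b, 0, 0, 0;
               0, 0, c, e, 0;
               0, 0, e, d, 0;
               0, 0, 0, 0, a + b])) ∧
    (∀ g : Matrix (Fin 5) (Fin 5) ℝ, g * gᵀ = 1 →
      (IsAutoLam7 g ↔ ∃ H₁ H₂ : Matrix (Fin 2) (Fin 2) ℝ,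
        H₁ * H₁ᵀ = 1 ∧ H₂ * H₂ᵀ = 1 ∧
        g = !![H₁ 0 0, H₁ 0 1, 0, 0, 0;
               H₁ 1 0, H₁ 1 1, 0, 0, 0;
               0, 0, H₂ 0 0, H₂ 0 1, 0;
               0, 0, H₂ 1 0, H₂ 1 1, 0;
               0, 0, 0, 0, H₁.det])) := by
  constructor
  · intro D hD
    constructor
    · intro h
      have key : ∀ (x y : Fin 5 → ℝ) (i : Fin 5),
          D.mulVec (lam7 x y) i = lam7 (D.mulVec x) y i + lam7 x (D.mulVec y) i :=
        fun x y i => congrFun (h x y) i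
      have h01 := fun i => key ![1,0,0,0,0] ![0,1,0,0,0] i
      have h21 := key ![0,0,1,0,0] ![0,1,0,0,0] 4
      have h31 := key ![0,0,0,1,0] ![0,1,0,0,0] 4
      have h02 := key ![1,0,0,0,0] ![0,0,1,0,0] 4
      have h03 := key ![1,0,0,0,0] ![0,0,0,1,0] 4
      have e04 := h01 0
      have e14 := h01 1
      have e24 := h01 2
      have e34 := h01 3
      have e44 := h01 4
      simp [lam7, Matrix.mulVec, dotProduct, Fin.sum_univ_five] at h21 h31 h02 h03 e04 e14 e24 e34 e44
      have s : ∀ i j : Fin 5, D j i = D i j := fun i j => congrFun (congrFun hD i) j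
      refine ⟨D 0 0, D 1 1, D 0 1, D 2 2, D 3 3, D 2 3, ?_⟩
      ext i j
      fin_cases i <;> fin_cases j <;>
        simp [Matrix.vecHead, Matrix.vecTail] <;>
        first
          | rfl
          | linarith [s 0 1, s 0 2, s 0 3, s 0 4, s 1 2, s 1 3, s 1 4, s 2 3, s 2 4, s 3 4]
    · rintro ⟨a, b, α, c, d, e, rfl⟩
      intro x y
      funext i
      fin_cases i <;>
        simp [lam7, Matrix.mulVec, dotProduct, Fin.sum_univ_five] <;> ring
  · intro g hg
    constructor
    · intro h
      have hg' : gᵀ * g = 1 := mul_eq_one_comm.mp hg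
      have o : ∀ i j : Fin 5, (g * gᵀ) i j = (1 : Matrix (Fin 5) (Fin 5) ℝ) i j :=
        fun i j => congrFun (congrFun hg i) j
      have o' : ∀ i j : Fin 5, (gᵀ * g) i j = (1 : Matrix (Fin 5) (Fin 5) ℝ) i j :=
        fun i j => congrFun (congrFun hg' i) j
      have key : ∀ (x y : Fin 5 → ℝ) (i : Fin 5),
          g.mulVec (lam7 x y) i = lam7 (g.mulVec x) (g.mulVec y) i :=
        fun x y i => congrFun (h.2 x y) i
      have A01 := fun i => key ![1,0,0,0,0] ![0,1,0,0,0] i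
      have A21 := key ![0,0,1,0,0] ![0,1,0,0,0] 4
      have A31 := key ![0,0,0,1,0] ![0,1,0,0,0] 4
      have A02 := key ![1,0,0,0,0] ![0,0,1,0,0] 4
      have A03 := key ![1,0,0,0,0] ![0,0,0,1,0] 4
      have z04 := A01 0
      have z14 := A01 1
      have z24 := A01 2
      have z34 := A01 3
      have hd := A01 4
      have o44 := o 4 4
      have o'44 := o' 4 4
      have o00 := o 0 0
      have o01 := o 0 1
      have o11 := o 1 1
      have o'00 := o' 0 0
      have o'11 := o' 1 1
      have o22 := o 2 2
      have o23 := o 2 3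
      have o33 := o 3 3
      simp [lam7, Matrix.mulVec, dotProduct, Fin.sum_univ_five, Matrix.mul_apply,
        Matrix.one_apply] at A21 A31 A02 A03 z04 z14 z24 z34 hd o44 o'44 o00 o01 o11 o'00 o'11 o22 o23 o33
      have hsq : g 4 4 * g 4 4 = 1 := by
        linear_combination o'44 - g 0 4 * z04 - g 1 4 * z14 - g 2 4 * z24 - g 3 4 * z34
      have z12 : g 1 2 = 0 := by
        linear_combination (-(g 4 4 * g 1 1)) * A02 - (g 4 4 * g 1 0) * A21 +
          (g 4 4 * g 1 2) * hd - g 1 2 * hsq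
      have z02 : g 0 2 = 0 := by
        linear_combination (-(g 4 4 * g 0 0)) * A21 - (g 4 4 * g 0 1) * A02 +
          (g 4 4 * g 0 2) * hd - g 0 2 * hsq
      have z13 : g 1 3 = 0 := by
        linear_combination (-(g 4 4 * g 1 1)) * A03 - (g 4 4 * g 1 0) * A31 +
          (g 4 4 * g 1 3) * hd - g 1 3 * hsq
      have z03 : g 0 3 = 0 := by
        linear_combination (-(g 4 4 * g 0 0)) * A31 - (g 4 4 * g 0 1) * A03 +
          (g 4 4 * g 0 3) * hd - g 0 3 * hsq
      have r00 : g 0 0 * g 0 0 + g 0 1 * g 0 1 = 1 := by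
        linear_combination o00 - g 0 2 * z02 - g 0 3 * z03 - g 0 4 * z04
      have r01 : g 0 0 * g 1 0 + g 0 1 * g 1 1 = 0 := by
        linear_combination o01 - g 1 2 * z02 - g 1 3 * z03 - g 1 4 * z04
      have r11 : g 1 0 * g 1 0 + g 1 1 * g 1 1 = 1 := by
        linear_combination o11 - g 1 2 * z12 - g 1 3 * z13 - g 1 4 * z14
      have hH1 : (!![g 0 0, g 0 1; g 1 0, g 1 1] : Matrix (Fin 2) (Fin 2) ℝ) *
          (!![g 0 0, g 0 1; g 1 0, g 1 1])ᵀ = 1 := by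
        ext i j
        fin_cases i <;> fin_cases j <;>
          simp [Matrix.mul_apply, Matrix.transpose_apply, Fin.sum_univ_two, Matrix.one_apply, Matrix.vecHead, Matrix.vecTail] <;> linarith [r00, r01, r11]
      have hH1' := mul_eq_one_comm.mp hH1
      have c00 := congrFun (congrFun hH1' 0) 0
      have c11 := congrFun (congrFun hH1' 1) 1
      simp [Matrix.mul_apply, Matrix.transpose_apply, Fin.sum_univ_two, Matrix.one_apply, Matrix.vecHead, Matrix.vecTail] at c00 c11
      -- row 4 zeros
      have rowsum : g 4 0 * g 4 0 + g 4 1 * g 4 1 + g 4 2 * g 4 2 + g 4 3 * g 4 3 = 0 := by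
        linear_combination o44 - hsq
      have z40 : g 4 0 = 0 := mul_self_eq_zero.mp (le_antisymm (by linarith [mul_self_nonneg (g 4 1), mul_self_nonneg (g 4 2), mul_self_nonneg (g 4 3)]) (mul_self_nonneg _))
      have z41 : g 4 1 = 0 := mul_self_eq_zero.mp (le_antisymm (by linarith [mul_self_nonneg (g 4 0), mul_self_nonneg (g 4 2), mul_self_nonneg (g 4 3)]) (mul_self_nonneg _))
      have z42 : g 4 2 = 0 := mul_self_eq_zero.mp (le_antisymm (by linarith [mul_self_nonneg (g 4 0), mul_self_nonneg (g 4 1), mul_self_nonneg (g 4 3)]) (mul_self_nonneg _))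
      have z43 : g 4 3 = 0 := mul_self_eq_zero.mp (le_antisymm (by linarith [mul_self_nonneg (g 4 0), mul_self_nonneg (g 4 1), mul_self_nonneg (g 4 2)]) (mul_self_nonneg _))
      -- lower-left zeros
      have c0sum : g 2 0 * g 2 0 + g 3 0 * g 3 0 = 0 := by
        linear_combination o'00 - c00 - g 4 0 * z40
      have c1sum : g 2 1 * g 2 1 + g 3 1 * g 3 1 = 0 := by
        linear_combination o'11 - c11 - g 4 1 * z41
      have z20 : g 2 0 = 0 := mul_self_eq_zero.mp (le_antisymm (by linarith [mul_self_nonneg (g 3 0)]) (mul_self_nonneg _))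
      have z30 : g 3 0 = 0 := mul_self_eq_zero.mp (le_antisymm (by linarith [mul_self_nonneg (g 2 0)]) (mul_self_nonneg _))
      have z21 : g 2 1 = 0 := mul_self_eq_zero.mp (le_antisymm (by linarith [mul_self_nonneg (g 3 1)]) (mul_self_nonneg _))
      have z31 : g 3 1 = 0 := mul_self_eq_zero.mp (le_antisymm (by linarith [mul_self_nonneg (g 2 1)]) (mul_self_nonneg _))
      -- H2
      have s22 : g 2 2 * g 2 2 + g 2 3 * g 2 3 = 1 := by
        linear_combination o22 - g 2 0 * z20 - g 2 1 * z21 - g 2 4 * z24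
      have s23 : g 2 2 * g 3 2 + g 2 3 * g 3 3 = 0 := by
        linear_combination o23 - g 3 0 * z20 - g 3 1 * z21 - g 3 4 * z24
      have s33 : g 3 2 * g 3 2 + g 3 3 * g 3 3 = 1 := by
        linear_combination o33 - g 3 0 * z30 - g 3 1 * z31 - g 3 4 * z34
      have hH2 : (!![g 2 2, g 2 3; g 3 2, g 3 3] : Matrix (Fin 2) (Fin 2) ℝ) *
          (!![g 2 2, g 2 3; g 3 2, g 3 3])ᵀ = 1 := by
        ext i j
        fin_cases i <;> fin_cases j <;>
          simp [Matrix.mul_apply, Matrix.transpose_apply, Fin.sum_univ_two, Matrix.one_apply, Matrix.vecHead, Matrix.vecTail] <;> linarith [s22, s23, s33]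
      clear o o' key A01 h hg hg' o44 o'44 o00 o01 o11 o'00 o'11 o22 o23 o33 rowsum c0sum c1sum r00 r01 r11 s22 s23 s33 c00 c11 A21 A31 A02 A03 hsq
      refine ⟨_, _, hH1, hH2, ?_⟩
      ext i j
      fin_cases i <;> fin_cases j <;>
        simp [Matrix.vecHead, Matrix.vecTail, Matrix.det_fin_two] <;>
        linarith [z02, z03, z04, z12, z13, z14, z20, z21, z24, z30, z31, z34, z40, z41, z42, z43, hd]
    · rintro ⟨H₁, H₂, hH1, hH2, rfl⟩
      refine ⟨⟨⟨_, _, hg, mul_eq_one_comm.mp hg⟩, rfl⟩, fun x y => ?_⟩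
      funext i
      fin_cases i <;>
        simp [lam7, Matrix.mulVec, dotProduct, Fin.sum_univ_five, Matrix.det_fin_two] <;> ring
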